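/- arXiv:2311.02918 — 5 statements merged into one kernel-verified Lean document; each statement's English description precedes it below -/
import Mathlib

section
/- For any nonzero complex numbers a = |a|e^{iθ_a} and b = |b|e^{iθ_b} with |a| ≠ |b| and θ_a ≠ θ_b (mod π), define f₁(c) = |a|e^{iθ_a} + c·|b|e^{iθ_b} and f₂(c) = |b|e^{iθ_a} + c·|a|e^{iθ_b}. Assuming f₁(±1) and f₂(±1) are all nonzero, the sum of phase differences satisfies [arg(f₁(1)) − arg(f₁(−1))] + [arg(f₂(1)) − arg(f₂(−1))] ≡ π (mod 2π). -/
/-!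
Put `u = e^{iθ_a}`, `v = e^{iθ_b}`, `A = |a|`, `B = |b|` and `t = Re (u v̄) = cos (θ_a - θ_b)`. Since
`u² + v² = 2 t u v`, the swapped pair multiplies out to
`f₁(c) f₂(c) = (2 A B t + c (A² + B²)) u v` for `c = ±1`, and `|2 A B t| < A² + B²` because
`A ≠ B`. So `f₁(1) f₂(1) / (f₁(-1) f₂(-1))` is a negative real number, whose argument is `π`.
-/

open Complex

open scoped ComplexConjugate

namespace Complex

theorem sq_add_sq_eq_two_re_mul_conj_mul {u v : ℂ} (hu : ‖u‖ = 1) (hv : ‖v‖ = 1) :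
    u ^ 2 + v ^ 2 = 2 * (u * conj v).re * (u * v) := by
  have huu : u * conj u = 1 := by simp [mul_conj', hu]
  have hvv : v * conj v = 1 := by simp [mul_conj', hv]
  rw [re_eq_add_conj, map_mul, conj_conj]
  linear_combination (-u ^ 2) * hvv - v ^ 2 * huu

theorem mul_mul_swap_norms {u v c : ℂ} (hu : ‖u‖ = 1) (hv : ‖v‖ = 1) (hc : c ^ 2 = 1) (A B : ℝ) :
    (A * u + c * B * v) * (B * u + c * A * v)
      = (2 * A * B * (u * conj v).re + c * (A ^ 2 + B ^ 2)) * (u * v) := by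
  linear_combination (A : ℂ) * B * sq_add_sq_eq_two_re_mul_conj_mul hu hv
    + (A : ℂ) * B * v ^ 2 * hc

theorem coe_arg_sub_add_arg_sub {z₁ z₂ w₁ w₂ : ℂ}
    (hz₁ : z₁ ≠ 0) (hz₂ : z₂ ≠ 0) (hw₁ : w₁ ≠ 0) (hw₂ : w₂ ≠ 0) :
    (((z₁.arg - z₂.arg) + (w₁.arg - w₂.arg) : ℝ) : Real.Angle)
      = (z₁ * w₁ / (z₂ * w₂)).arg := by
  rw [arg_div_coe_angle (mul_ne_zero hz₁ hw₁) (mul_ne_zero hz₂ hw₂),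
    arg_mul_coe_angle hz₁ hw₁, arg_mul_coe_angle hz₂ hw₂]
  simp only [Real.Angle.coe_add, Real.Angle.coe_sub]
  abel

end Complex

theorem abs_two_mul_mul_mul_lt_sq_add_sq {A B t : ℝ} (hA : 0 ≤ A) (hB : 0 ≤ B) (hAB : A ≠ B)
    (ht : |t| ≤ 1) : |2 * A * B * t| < A ^ 2 + B ^ 2 := by
  have hsq : 0 < (A - B) ^ 2 := by positivity [sub_ne_zero.mpr hAB]
  rw [abs_mul, abs_of_nonneg (by positivity : 0 ≤ 2 * A * B)]
  nlinarith [mul_nonneg hA hB]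

theorem commutative_phase_general (a b : ℂ)
    (habs : ‖a‖ ≠ ‖b‖)
    (f₁ f₂ : ℂ → ℂ)
    (hf₁ : ∀ c : ℂ, f₁ c = (‖a‖ : ℂ) * Complex.exp (a.arg * Complex.I)
        + c * (‖b‖ : ℂ) * Complex.exp (b.arg * Complex.I))
    (hf₂ : ∀ c : ℂ, f₂ c = (‖b‖ : ℂ) * Complex.exp (a.arg * Complex.I)
        + c * (‖a‖ : ℂ) * Complex.exp (b.arg * Complex.I))
    (h11 : f₁ 1 ≠ 0) (h1m : f₁ (-1) ≠ 0) (h21 : f₂ 1 ≠ 0) (h2m : f₂ (-1) ≠ 0) :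
    ∃ k : ℤ, ((f₁ 1).arg - (f₁ (-1)).arg) + ((f₂ 1).arg - (f₂ (-1)).arg)
      = Real.pi + 2 * Real.pi * k := by
  set u := Complex.exp (a.arg * Complex.I)
  set v := Complex.exp (b.arg * Complex.I)
  have hu : ‖u‖ = 1 := norm_exp_ofReal_mul_I _
  have hv : ‖v‖ = 1 := norm_exp_ofReal_mul_I _
  set t := (u * conj v).re
  have ht : |t| ≤ 1 := (abs_re_le_norm _).trans (by simp [hu, hv])
  have hlt := abs_lt.mp <| abs_two_mul_mul_mul_lt_sq_add_sq (norm_nonneg a) (norm_nonneg b) habs ht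
  have hratio : f₁ 1 * f₂ 1 / (f₁ (-1) * f₂ (-1))
      = ((2 * ‖a‖ * ‖b‖ * t + (‖a‖ ^ 2 + ‖b‖ ^ 2)) / (2 * ‖a‖ * ‖b‖ * t - (‖a‖ ^ 2 + ‖b‖ ^ 2))
        : ℝ) := by
    rw [hf₁, hf₂, hf₁, hf₂, mul_mul_swap_norms hu hv (one_pow 2),
      mul_mul_swap_norms hu hv (by norm_num), mul_div_mul_right _ _
         (mul_ne_zero (exp_ne_zero _) (exp_ne_zero _))]
    push_cast
    ring
  have hneg : (f₁ 1 * f₂ 1 / (f₁ (-1) * f₂ (-1))).arg = Real.pi := by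
    rw [hratio, arg_ofReal_of_neg (div_neg_of_pos_of_neg (by linarith) (by linarith))]
  have hangle := Complex.coe_arg_sub_add_arg_sub h11 h1m h21 h2m
  rw [hneg] at hangle
  exact (Real.Angle.angle_eq_iff_two_pi_dvd_sub.mp hangle).imp fun k hk => by linarith

/-- the sum of the phase differences of f₁ and f₂ (between c = 1 and c = -1)
is π modulo 2π, where f₁(c) = |a|e^{iθ_a} + c|b|e^{iθ_b}, f₂(c) = |b|e^{iθ_a} + c|a|e^{iθ_b}. -/
theorem commutative_phase (a b : ℂ) (ha : a ≠ 0) (hb : b ≠ 0)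
    (habs : ‖a‖ ≠ ‖b‖)
    (harg : ∀ k : ℤ, a.arg - b.arg ≠ k * Real.pi)
    (f₁ f₂ : ℂ → ℂ)
    (hf₁ : ∀ c : ℂ, f₁ c = (‖a‖ : ℂ) * Complex.exp (a.arg * Complex.I)
        + c * (‖b‖ : ℂ) * Complex.exp (b.arg * Complex.I))
    (hf₂ : ∀ c : ℂ, f₂ c = (‖b‖ : ℂ) * Complex.exp (a.arg * Complex.I)
        + c * (‖a‖ : ℂ) * Complex.exp (b.arg * Complex.I))
    (h11 : f₁ 1 ≠ 0) (h1m : f₁ (-1) ≠ 0) (h21 : f₂ 1 ≠ 0) (h2m : f₂ (-1) ≠ 0) :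
    ∃ k : ℤ, ((f₁ 1).arg - (f₁ (-1)).arg) + ((f₂ 1).arg - (f₂ (-1)).arg)
      = Real.pi + 2 * Real.pi * k :=
  commutative_phase_general a b habs f₁ f₂ hf₁ hf₂ h11 h1m h21 h2m
end

section
/- With blocked direct link (t = 0), the maximum over x ∈ [0, N] of D(x) = min{f₁(x), f₂(x), f₃(x)}, where f₁(x) = 2ρ[(2+√2)x² − (2+√2)Nx + N²], f₂(x) = 4ρx², f₃(x) = 4ρ(N−x)², is attained at x* = ((√3+1−√2)/2)·N (and by symmetry also at x = ((√2+1−√3)/2)·N). -/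
open Real

/-- with blocked direct link, D(x) = min{f₁,f₂,f₃}(x) is maximized over
[0,N] at x* = ((√3+1−√2)/2)N, and (by symmetry) also at ((√2+1−√3)/2)N. -/
theorem optimal_partition_blocked (N ρ : ℝ) (hN : 0 < N) (hρ : 0 < ρ)
    (f₁ f₂ f₃ D : ℝ → ℝ)
    (hf₁ : ∀ x, f₁ x = 2 * ρ * ((2 + Real.sqrt 2) * x ^ 2
        - (2 + Real.sqrt 2) * N * x + N ^ 2))
    (hf₂ : ∀ x, f₂ x = 4 * ρ * x ^ 2)
    (hf₃ : ∀ x, f₃ x = 4 * ρ * (N - x) ^ 2)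
    (hD : ∀ x, D x = min (f₁ x) (min (f₂ x) (f₃ x))) :
    (∀ x ∈ Set.Icc (0 : ℝ) N, D x ≤ D ((Real.sqrt 3 + 1 - Real.sqrt 2) / 2 * N)) ∧
      D ((Real.sqrt 3 + 1 - Real.sqrt 2) / 2 * N)
        = D ((Real.sqrt 2 + 1 - Real.sqrt 3) / 2 * N) := by
  have ha : Real.sqrt 2 ^ 2 = 2 := Real.sq_sqrt (by norm_num)
  have hb : Real.sqrt 3 ^ 2 = 3 := Real.sq_sqrt (by norm_num)
  have ha0 : 0 ≤ Real.sqrt 2 := Real.sqrt_nonneg 2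
  have hb0 : 0 ≤ Real.sqrt 3 := Real.sqrt_nonneg 3
  have ha1 : 1 ≤ Real.sqrt 2 := by nlinarith
  have hb2 : Real.sqrt 3 ≤ 2 := by nlinarith
  have hba : Real.sqrt 2 ≤ Real.sqrt 3 := Real.sqrt_le_sqrt (by norm_num)
  set x₁ : ℝ := (Real.sqrt 3 + 1 - Real.sqrt 2) / 2 * N with hx₁def
  set x₂ : ℝ := (Real.sqrt 2 + 1 - Real.sqrt 3) / 2 * N with hx₂def
  set M : ℝ := 2 * ρ * N ^ 2 * (3 + Real.sqrt 2 - Real.sqrt 3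
      - Real.sqrt 2 * Real.sqrt 3) with hMdef
  -- factorisation of f₁
  have hfact : ∀ x, f₁ x = M + 2 * ρ * (2 + Real.sqrt 2) * ((x - x₂) * (x - x₁)) := by
    intro x
    rw [hf₁, hx₁def, hx₂def, hMdef]
    linear_combination (ρ * (2 + Real.sqrt 2) / 2 - ρ * Real.sqrt 3) * N ^ 2 * ha
      + (ρ * (2 + Real.sqrt 2) / 2) * N ^ 2 * hb
  have hf2x2 : f₂ x₂ = M := by
    rw [hf₂, hx₂def, hMdef]
    linear_combination ρ * N ^ 2 * ha + ρ * N ^ 2 * hb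
  have hf3x1 : f₃ x₁ = M := by
    rw [hf₃, hx₁def, hMdef]
    linear_combination ρ * N ^ 2 * ha + ρ * N ^ 2 * hb
  have hf2x1 : f₂ x₁ = M + 4 * ρ * N ^ 2 * (Real.sqrt 3 - Real.sqrt 2) := by
    rw [hf₂, hx₁def, hMdef]
    linear_combination ρ * N ^ 2 * ha + ρ * N ^ 2 * hb
  have hf3x2 : f₃ x₂ = M + 4 * ρ * N ^ 2 * (Real.sqrt 3 - Real.sqrt 2) := by
    rw [hf₃, hx₂def, hMdef]
    linear_combination ρ * N ^ 2 * ha + ρ * N ^ 2 * hb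
  have hgap : 0 ≤ 4 * ρ * N ^ 2 * (Real.sqrt 3 - Real.sqrt 2) :=
    mul_nonneg (by positivity) (by linarith)
  have hx2nn : 0 ≤ x₂ := by
    rw [hx₂def]
    apply mul_nonneg _ hN.le
    linarith
  have hx1N : x₁ ≤ N := by
    rw [hx₁def]
    nlinarith
  -- D at the two special points
  have hDx₁ : D x₁ = M := by
    rw [hD]
    have e1 : f₁ x₁ = M := by rw [hfact]; ring
    rw [e1, hf3x1, hf2x1]
    have h1 : (M + 4 * ρ * N ^ 2 * (Real.sqrt 3 - Real.sqrt 2)) ⊓ M = M :=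
      min_eq_right (by linarith)
    rw [h1, min_self]
  have hDx₂ : D x₂ = M := by
    rw [hD]
    have e1 : f₁ x₂ = M := by rw [hfact]; ring
    rw [e1, hf2x2, hf3x2]
    have h1 : M ⊓ (M + 4 * ρ * N ^ 2 * (Real.sqrt 3 - Real.sqrt 2)) = M :=
      min_eq_left (by linarith)
    rw [h1, min_self]
  -- the global bound
  have key : ∀ x ∈ Set.Icc (0 : ℝ) N, D x ≤ M := by
    rintro x ⟨hx0, hxN⟩
    rw [hD]
    rcases le_total x x₂ with h | h
    · refine le_trans (le_trans (min_le_right _ _) (min_le_left _ _)) ?_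
      have h1 : x ^ 2 ≤ x₂ ^ 2 := pow_le_pow_left₀ hx0 h 2
      have h2 : f₂ x₂ = M := hf2x2
      rw [hf₂] at h2 ⊢
      have h3 := mul_le_mul_of_nonneg_left h1 (by positivity : (0:ℝ) ≤ 4 * ρ)
      linarith
    · rcases le_total x x₁ with h' | h'
      · refine le_trans (min_le_left _ _) ?_
        rw [hfact]
        have hp : (x - x₂) * (x - x₁) ≤ 0 :=
          mul_nonpos_of_nonneg_of_nonpos (by linarith) (by linarith)
        have h2 : (0:ℝ) ≤ 2 * ρ * (2 + Real.sqrt 2) := by positivity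
        have h3 := mul_nonpos_of_nonneg_of_nonpos h2 hp
        linarith
      · refine le_trans (le_trans (min_le_right _ _) (min_le_right _ _)) ?_
        have h1 : (N - x) ^ 2 ≤ (N - x₁) ^ 2 := pow_le_pow_left₀ (by linarith) (by linarith) 2
        have h2 : f₃ x₁ = M := hf3x1
        rw [hf₃] at h2 ⊢
        have h3 := mul_le_mul_of_nonneg_left h1 (by positivity : (0:ℝ) ≤ 4 * ρ)
        linarith
  constructor
  · intro x hx
    rw [hDx₁]
    exact key x hx
  · rw [hDx₁, hDx₂]
end

section
/- With blocked direct link and N elements, the BER performance gain of the proposed partitioning over the conventional scheme satisfies P_s^gain = 0.5 − Q(√(α₁γ_b N²)) ≥ 0.5 − 0.5·e^{−α₁γ_b N²/2}, where α₁ = ζ₁² + ζ₂² − √2ζ₁ζ₂ > 0 with ζ₁ = (√3+1−√2)/2, ζ₂ = (√2+1−√3)/2, and γ_b > 0. In particular P_s^gain → 0.5 as N → ∞. -/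
/-!
The Chernoff-type bound `Q(x) ≤ ½ e^{-x²/2}` for `x ≥ 0` comes from shifting the tail integral to
`(0, ∞)` and using `(t + x)² ≥ t² + x²` there, which leaves `e^{-x²/2}` times half a Gaussian
integral. It forces `Q(x) → 0`, hence the gain tends to `½` as soon as the SNR `α₁ γ_b N²` grows,
and `α₁ > 0` because `a² + b² - √2 a b` is a positive definite quadratic form (`√2 < 2`).
-/

open Real MeasureTheory Filter

/-- The Gaussian Q-function. -/
noncomputable def gaussQ (x : ℝ) : ℝ :=
  ∫ η in Set.Ioi x, (1 / Real.sqrt (2 * Real.pi)) * Real.exp (-η ^ 2 / 2)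

open Topology

lemma setIntegral_Ioi_zero_comp_add_right {E : Type*} [NormedAddCommGroup E] [NormedSpace ℝ E]
    (f : ℝ → E) (a : ℝ) : ∫ t in Set.Ioi 0, f (t + a) = ∫ x in Set.Ioi a, f x := by
  have h := (measurePreserving_add_right volume a).setIntegral_preimage_emb
    (measurableEmbedding_addRight a) f (Set.Ioi a)
  rwa [Set.preimage_add_const_Ioi, sub_self] at h

lemma integrable_exp_neg_sq_div_two : Integrable fun t : ℝ => exp (-t ^ 2 / 2) := by
  convert integrable_exp_neg_mul_sq (b := 1 / 2) (by norm_num) using 3 with t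
  ring

lemma integral_Ioi_zero_exp_neg_sq_div_two :
    ∫ t in Set.Ioi (0 : ℝ), exp (-t ^ 2 / 2) = √(2 * π) / 2 := by
  have h := integral_gaussian_Ioi (1 / 2)
  rw [show π / (1 / 2) = 2 * π by ring] at h
  rw [← h]
  congr 1 with t
  ring_nf

lemma gaussQ_nonneg (x : ℝ) : 0 ≤ gaussQ x :=
  setIntegral_nonneg measurableSet_Ioi fun _ _ => by positivity

theorem gaussQ_le_exp_neg_sq_div_two {x : ℝ} (hx : 0 ≤ x) :
    gaussQ x ≤ exp (-x ^ 2 / 2) / 2 := by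
  set c := 1 / √(2 * π)
  have hc : c * √(2 * π) = 1 := one_div_mul_cancel (by positivity)
  have hpointwise : ∀ t ∈ Set.Ioi (0 : ℝ),
      c * exp (-(t + x) ^ 2 / 2) ≤ c * exp (-x ^ 2 / 2) * exp (-t ^ 2 / 2) := by
    intro t ht
    rw [mul_assoc, ← exp_add]
    gcongr
    nlinarith [mul_nonneg (le_of_lt ht) hx]
  calc gaussQ x = ∫ t in Set.Ioi 0, c * exp (-(t + x) ^ 2 / 2) :=
        (setIntegral_Ioi_zero_comp_add_right (fun η => c * exp (-η ^ 2 / 2)) x).symm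
    _ ≤ ∫ t in Set.Ioi 0, c * exp (-x ^ 2 / 2) * exp (-t ^ 2 / 2) :=
        integral_mono_of_nonneg (.of_forall fun _ => by positivity)
          (integrable_exp_neg_sq_div_two.const_mul _).integrableOn
          ((ae_restrict_iff' measurableSet_Ioi).mpr (.of_forall hpointwise))
    _ = exp (-x ^ 2 / 2) / 2 := by
        rw [integral_const_mul, integral_Ioi_zero_exp_neg_sq_div_two]
        linear_combination exp (-x ^ 2 / 2) / 2 * hc

theorem tendsto_gaussQ_atTop : Tendsto gaussQ atTop (𝓝 0) := by
  have hbound : Tendsto (fun x : ℝ => exp (-x ^ 2 / 2) / 2) atTop (𝓝 0) := by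
    have hsq : Tendsto (fun x : ℝ => x ^ 2 / 2) atTop atTop :=
      (tendsto_pow_atTop two_ne_zero).atTop_div_const two_pos
    simpa [neg_div] using (tendsto_exp_neg_atTop_nhds_zero.comp hsq).div_const 2
  exact squeeze_zero' (.of_forall gaussQ_nonneg)
    ((eventually_ge_atTop 0).mono fun _ => gaussQ_le_exp_neg_sq_div_two) hbound

lemma sq_add_sq_sub_sqrt_two_mul_mul_pos {a : ℝ} (b : ℝ) (ha : a ≠ 0) :
    0 < a ^ 2 + b ^ 2 - √2 * a * b := by
  have h2 : √2 ^ 2 = 2 := sq_sqrt zero_le_two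
  have hsos : a ^ 2 + b ^ 2 - √2 * a * b = (b - √2 / 2 * a) ^ 2 + a ^ 2 / 2 := by
    linear_combination (-a ^ 2 / 4) * h2
  rw [hsos]
  positivity

theorem performance_gain_general (γb ζ₁ ζ₂ α₁ : ℝ) (hγ : 0 < γb)
    (h₁ : ζ₁ = (Real.sqrt 3 + 1 - Real.sqrt 2) / 2)
    (hα : α₁ = ζ₁ ^ 2 + ζ₂ ^ 2 - Real.sqrt 2 * ζ₁ * ζ₂) :
    0 < α₁ ∧
    (∀ N : ℝ, 0 < N →
      0.5 - gaussQ (Real.sqrt (α₁ * γb * N ^ 2))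
        ≥ 0.5 - 0.5 * Real.exp (-(α₁ * γb * N ^ 2) / 2)) ∧
    Tendsto (fun N : ℝ => 0.5 - gaussQ (Real.sqrt (α₁ * γb * N ^ 2)))
      atTop (nhds 0.5) := by
  have hα₁ : 0 < α₁ := by
    have hζ₁ : 0 < ζ₁ := by
      have : √2 < √3 := sqrt_lt_sqrt zero_le_two (by norm_num)
      rw [h₁]
      linarith
    exact hα ▸ sq_add_sq_sub_sqrt_two_mul_mul_pos ζ₂ hζ₁.ne'
  refine ⟨hα₁, fun N _ => ?_, ?_⟩
  · have hQ := gaussQ_le_exp_neg_sq_div_two (sqrt_nonneg (α₁ * γb * N ^ 2))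
    rw [sq_sqrt (by positivity)] at hQ
    norm_num
    linarith
  · have hSNR : Tendsto (fun N : ℝ => √(α₁ * γb * N ^ 2)) atTop atTop :=
      tendsto_sqrt_atTop.comp ((tendsto_pow_atTop two_ne_zero).const_mul_atTop (by positivity))
    simpa using tendsto_const_nhds.sub (tendsto_gaussQ_atTop.comp hSNR)

/-- with blocked direct link, α₁ = ζ₁² + ζ₂² − √2 ζ₁ζ₂ > 0, the BER gain
0.5 − Q(√(α₁ γ_b N²)) is at least 0.5 − 0.5 e^{−α₁γ_b N²/2} for every N > 0, and it
tends to 0.5 as N → ∞. -/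
theorem performance_gain (γb ζ₁ ζ₂ α₁ : ℝ) (hγ : 0 < γb)
    (h₁ : ζ₁ = (Real.sqrt 3 + 1 - Real.sqrt 2) / 2)
    (h₂ : ζ₂ = (Real.sqrt 2 + 1 - Real.sqrt 3) / 2)
    (hα : α₁ = ζ₁ ^ 2 + ζ₂ ^ 2 - Real.sqrt 2 * ζ₁ * ζ₂) :
    0 < α₁ ∧
    (∀ N : ℝ, 0 < N →
      0.5 - gaussQ (Real.sqrt (α₁ * γb * N ^ 2))
        ≥ 0.5 - 0.5 * Real.exp (-(α₁ * γb * N ^ 2) / 2)) ∧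
    Tendsto (fun N : ℝ => 0.5 - gaussQ (Real.sqrt (α₁ * γb * N ^ 2)))
      atTop (nhds 0.5) :=
  performance_gain_general γb ζ₁ ζ₂ α₁ hγ h₁ hα
end

section
/- Let A > 0, B > 0, θ ∈ ℝ, and set h_e = A·e^{iθ} and h₂ = B·e^{i(θ+π/4)}. If A ≥ √2·B, then both |arg((h_e + h₂)·e^{−iθ})| ≤ π/4 and |arg((h_e − h₂)·e^{−iθ})| ≤ π/4 hold (arguments taken in (−π, π]). -/
open Complex Real

lemma arg_abs_le_pi_div_four (z : ℂ) (hre : 0 < z.re) (him : |z.im| ≤ z.re) :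
    |Complex.arg z| ≤ Real.pi / 4 := by
  rw [abs_le] at him
  have hne2 : Complex.arg z ≠ Real.pi / 2 := fun h => by
    have := (Complex.arg_eq_pi_div_two_iff.1 h).1; linarith
  have hne1 : Complex.arg z ≠ -(Real.pi / 2) := fun h => by
    have := (Complex.arg_eq_neg_pi_div_two_iff.1 h).1; linarith
  have h2 : Complex.arg z < Real.pi / 2 :=
    lt_of_le_of_ne (Complex.arg_le_pi_div_two_iff.2 (Or.inl hre.le)) hne2
  have h1 : -(Real.pi / 2) < Complex.arg z :=
    lt_of_le_of_ne (Complex.neg_pi_div_two_le_arg_iff.2 (Or.inl hre.le)) (Ne.symm hne1)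
  have hz : Complex.arg z = Real.arctan (z.im / z.re) := by
    rw [← Complex.tan_arg, Real.arctan_tan h1 h2]
  have hub : z.im / z.re ≤ 1 := (div_le_one hre).2 him.2
  have hlb : -(1:ℝ) ≤ z.im / z.re := by
    rw [le_div_iff₀ hre]; linarith [him.1]
  rw [hz, abs_le]
  constructor
  · rw [← Real.arctan_one, ← Real.arctan_neg]
    exact Real.arctan_strictMono.monotone hlb
  · rw [← Real.arctan_one]
    exact Real.arctan_strictMono.monotone hub

/-- Lemma 1: with h_e = A e^{iθ}, h₂ = B e^{i(θ+π/4)} and A ≥ √2 B,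
both phase rotations |arg((h_e ± h₂)e^{−iθ})| are at most π/4. -/
theorem phase_rotation_lemma (A B θ : ℝ) (hA : 0 < A) (hB : 0 < B)
    (h : A ≥ Real.sqrt 2 * B)
    (he h₂ : ℂ)
    (hhe : he = (A : ℂ) * Complex.exp (θ * Complex.I))
    (hh₂ : h₂ = (B : ℂ) * Complex.exp ((θ + Real.pi / 4) * Complex.I)) :
    |Complex.arg ((he + h₂) * Complex.exp (-θ * Complex.I))| ≤ Real.pi / 4 ∧
      |Complex.arg ((he - h₂) * Complex.exp (-θ * Complex.I))| ≤ Real.pi / 4 := by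
  have hsqrt2 : Real.sqrt 2 ^ 2 = 2 := Real.sq_sqrt (by norm_num)
  have hsqrt2_pos : 0 < Real.sqrt 2 := Real.sqrt_pos.2 (by norm_num)
  set w : ℂ := Complex.exp ((Real.pi / 4 : ℝ) * Complex.I) with hw
  have hwre : w.re = Real.sqrt 2 / 2 := by
    rw [hw, Complex.exp_ofReal_mul_I_re, Real.cos_pi_div_four]
  have hwim : w.im = Real.sqrt 2 / 2 := by
    rw [hw, Complex.exp_ofReal_mul_I_im, Real.sin_pi_div_four]
  have hcancel : Complex.exp (↑θ * Complex.I) * Complex.exp (-↑θ * Complex.I) = 1 := by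
    rw [← Complex.exp_add]; ring_nf; exact Complex.exp_zero
  have hsplit : Complex.exp ((↑θ + ↑Real.pi / 4) * Complex.I)
      = Complex.exp (↑θ * Complex.I) * w := by
    rw [hw, ← Complex.exp_add]; push_cast; ring_nf
  have hplus : (he + h₂) * Complex.exp (-θ * Complex.I) = (A : ℂ) + (B : ℂ) * w := by
    rw [hhe, hh₂]; push_cast
    rw [hsplit]
    calc (↑A * Complex.exp (↑θ * Complex.I) + ↑B * (Complex.exp (↑θ * Complex.I) * w)) * Complex.exp (-↑θ * Complex.I)
        = ↑A * (Complex.exp (↑θ * Complex.I) * Complex.exp (-↑θ * Complex.I)) + ↑B * w * (Complex.exp (↑θ * Complex.I) * Complex.exp (-↑θ * Complex.I)) := by ring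
      _ = _ := by rw [hcancel]; ring
  have hminus : (he - h₂) * Complex.exp (-θ * Complex.I) = (A : ℂ) - (B : ℂ) * w := by
    rw [hhe, hh₂]; push_cast
    rw [hsplit]
    calc (↑A * Complex.exp (↑θ * Complex.I) - ↑B * (Complex.exp (↑θ * Complex.I) * w)) * Complex.exp (-↑θ * Complex.I)
        = ↑A * (Complex.exp (↑θ * Complex.I) * Complex.exp (-↑θ * Complex.I)) - ↑B * w * (Complex.exp (↑θ * Complex.I) * Complex.exp (-↑θ * Complex.I)) := by ring
      _ = _ := by rw [hcancel]; ring
  have hBle : Real.sqrt 2 / 2 * B ≤ A / 2 := by nlinarith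
  constructor
  · rw [hplus]
    apply arg_abs_le_pi_div_four
    · simp only [Complex.add_re, Complex.mul_re, Complex.ofReal_re, Complex.ofReal_im,
        hwre, hwim]
      nlinarith
    · simp only [Complex.add_im, Complex.mul_im, Complex.add_re, Complex.mul_re,
        Complex.ofReal_re, Complex.ofReal_im, hwre, hwim]
      rw [_root_.abs_of_nonneg (by positivity)]
      nlinarith
  · rw [hminus]
    apply arg_abs_le_pi_div_four
    · simp only [Complex.sub_re, Complex.mul_re, Complex.ofReal_re, Complex.ofReal_im,
        hwre, hwim]
      nlinarith
    · simp only [Complex.sub_im, Complex.mul_im, Complex.sub_re, Complex.mul_re,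
        Complex.ofReal_re, Complex.ofReal_im, hwre, hwim]
      rw [_root_.abs_of_nonpos (by nlinarith)]
      nlinarith
end

section
/- Let t ≥ (√2+√6)/2 and N > 0, ρ > 0. Then for the functions f₁(x) = 2ρ[(2+√2)x² − (2+√2)(1−t)Nx + N²(1−√2t+t²)], f₂(x) = 4ρ(tN+x)², f₃(x) = 4ρ(N−x)² on [0, N], the max-min function D(x) = min{f₁(x), f₂(x), f₃(x)} is maximized at x = 0, i.e., D(0) ≥ D(x) for all x ∈ [0, N]. -/
open Real

/-- Case 4 of Theorem 2: if t ≥ (√2+√6)/2, then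
D(x) = min{f₁(x), f₂(x), f₃(x)} is maximized at x = 0 on [0, N]. -/
theorem optimal_partition_strong_direct (N ρ t : ℝ) (hN : 0 < N) (hρ : 0 < ρ)
    (ht : t ≥ (Real.sqrt 2 + Real.sqrt 6) / 2)
    (f₁ f₂ f₃ D : ℝ → ℝ)
    (hf₁ : ∀ x, f₁ x = 2 * ρ * ((2 + Real.sqrt 2) * x ^ 2
        - (2 + Real.sqrt 2) * (1 - t) * N * x + N ^ 2 * (1 - Real.sqrt 2 * t + t ^ 2)))
    (hf₂ : ∀ x, f₂ x = 4 * ρ * (t * N + x) ^ 2)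
    (hf₃ : ∀ x, f₃ x = 4 * ρ * (N - x) ^ 2)
    (hD : ∀ x, D x = min (f₁ x) (min (f₂ x) (f₃ x))) :
    ∀ x ∈ Set.Icc (0 : ℝ) N, D x ≤ D 0 := by
  intro x hx
  obtain ⟨hx0, hxN⟩ := hx
  have s2 : Real.sqrt 2 ^ 2 = 2 := Real.sq_sqrt (by norm_num)
  have s6 : Real.sqrt 6 ^ 2 = 6 := Real.sq_sqrt (by norm_num)
  have s2n : Real.sqrt 2 ≥ 1 := by nlinarith [Real.sqrt_nonneg 2]
  have s6n : Real.sqrt 6 ≥ 2 := by nlinarith [Real.sqrt_nonneg 6]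
  have ht1 : t ≥ 1 := by linarith
  have hq : t ^ 2 - Real.sqrt 2 * t - 1 ≥ 0 := by
    nlinarith [sq_nonneg (t - (Real.sqrt 2 + Real.sqrt 6) / 2),
      mul_nonneg (sub_nonneg.2 ht) (by linarith : (0:ℝ) ≤ t + (Real.sqrt 2 + Real.sqrt 6) / 2 - Real.sqrt 2)]
  have h3 : D x ≤ f₃ x := by
    rw [hD]; exact le_trans (min_le_right _ _) (min_le_right _ _)
  have h30 : f₃ x ≤ f₃ 0 := by
    rw [hf₃, hf₃]
    nlinarith [mul_nonneg hρ.le (mul_nonneg hx0 (by linarith : (0:ℝ) ≤ 2 * N - x))]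
  have hf31 : f₃ 0 ≤ f₁ 0 := by
    rw [hf₃, hf₁]
    nlinarith [mul_nonneg (mul_nonneg hρ.le (sq_nonneg N)) hq]
  have hf32 : f₃ 0 ≤ f₂ 0 := by
    rw [hf₃, hf₂]
    nlinarith [mul_nonneg (mul_nonneg hρ.le (sq_nonneg N)) (by nlinarith : (0:ℝ) ≤ t ^ 2 - 1)]
  rw [hD 0]
  refine le_min ?_ (le_min ?_ ?_) <;> linarith
end
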